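/- Let X be a locally compact non-compact Hausdorff abelian topological group with Haar measure and let φ : X → ℂ be a bounded Borel function. The following are equivalent: (1) φ is weakly vanishing at infinity, i.e. ∫_{a+K} |φ(x)| dx → 0 as a → ∞ for every compact K ⊆ X; (2) the convolution θ * |φ| belongs to C₀(X) for every θ ∈ C_c(X); (3) lim_{F_w} φ = 0, i.e. for every ε > 0 the set {x ∈ X : |φ(x)| > ε} is w-small at infinity. -/

import Mathlib

/-!
(1) ↔ (2): the kernel `x ↦ θ (a - x)` is supported in `a - tsupport θ`, so
`|(θ * |φ|)(a)| ≤ sup |θ| · ∫_{a - tsupport θ} |φ|`; conversely, an Urysohn function `θ ≥ 0`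
equal to `1` on `-K` gives `∫_{a+K} |φ| ≤ (θ * |φ|)(a)`. Continuity is that of a convolution
with a compactly supported continuous kernel.
(1) ↔ (3): Markov's inequality on `a + K` gives one direction; for the other, cover `K` by
finitely many translates of the given neighbourhood and integrate
`|φ| ≤ M · 1_{|φ| > ε} + ε` over `a + K`.
-/

open MeasureTheory Filter Set Topology
open scoped ENNReal Pointwise Convolution

section Markov

variable {α : Type*} [MeasurableSpace α] {μ : Measure α} {f : α → ℝ} {s : Set α}

theorem meas_ge_inter_le_ofReal_setIntegral_div (hs : MeasurableSet s)
    (hf : IntegrableOn f s μ) (hf0 : 0 ≤ f) {ε : ℝ} (hε : 0 < ε) :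
    μ ({x | ε ≤ f x} ∩ s) ≤ ENNReal.ofReal ((∫ x in s, f x ∂μ) / ε) := by
  have hfin : μ ({x | ε ≤ f x} ∩ s) ≠ ∞ := by
    rw [← Measure.restrict_apply' hs]
    exact (hf.measure_ge_lt_top hε).ne
  rw [← ENNReal.ofReal_toReal hfin]
  refine ENNReal.ofReal_le_ofReal ((le_div_iff₀' hε).2 ?_)
  simpa [measureReal_restrict_apply' hs, measureReal_def] using
    mul_meas_ge_le_integral_of_nonneg (ae_of_all _ hf0) hf ε

theorem setIntegral_le_mul_measureReal_add (hs : MeasurableSet s) (hμs : μ s ≠ ∞)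
    (hfm : Measurable f) (hf0 : 0 ≤ f) {M : ℝ} (hfM : ∀ x, f x ≤ M) {ε : ℝ} (hε : 0 ≤ ε) :
    ∫ x in s, f x ∂μ ≤ M * μ.real ({x | ε < f x} ∩ s) + ε * μ.real s := by
  have hS : MeasurableSet {x | ε < f x} := measurableSet_lt measurable_const hfm
  have : IsFiniteMeasure (μ.restrict s) := isFiniteMeasure_restrict.2 hμs
  have hfint : IntegrableOn f s μ :=
    Measure.integrableOn_of_bounded hμs hfm.aestronglyMeasurable
      (ae_of_all _ fun x => by simpa [abs_of_nonneg (hf0 x)] using hfM x)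
  calc ∫ x in s, f x ∂μ
      ≤ ∫ x in s, ({x | ε < f x}.indicator (fun _ => M) x + ε) ∂μ := by
        refine setIntegral_mono hfint ?_ fun x => ?_
        · exact ((integrable_const M).indicator hS).add (integrable_const ε)
        · by_cases hx : ε < f x
          · simpa [hx] using add_le_add (hfM x) hε
          · simpa [hx] using le_of_not_gt hx
    _ = M * μ.real ({x | ε < f x} ∩ s) + ε * μ.real s := by
        rw [integral_add ((integrable_const M).indicator hS) (integrable_const ε),
          integral_indicator_const _ hS, setIntegral_const]
        simp [measureReal_restrict_apply' hs, smul_eq_mul, mul_comm]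

end Markov

section

variable {X : Type*} [AddCommGroup X]

theorem sub_mem_iff_mem_vadd_neg {s : Set X} {a x : X} : a - x ∈ s ↔ x ∈ a +ᵥ -s := by
  rw [mem_vadd_set_iff_neg_vadd_mem, vadd_eq_add, neg_add_eq_sub, Set.mem_neg, neg_sub]

theorem integral_mul_ofReal_eq_convolution {𝕜 : Type*} [RCLike 𝕜] [MeasurableSpace X]
    (μ : Measure X) (f : X → ℝ) (θ : X → 𝕜) (a : X) :
    ∫ x, θ (a - x) * (f x : 𝕜) ∂μ = (f ⋆[ContinuousLinearMap.lsmul ℝ ℝ, μ] θ) a := by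
  simp only [convolution_def, ContinuousLinearMap.lsmul_apply, RCLike.real_smul_eq_coe_mul,
    mul_comm]

variable [TopologicalSpace X] [IsTopologicalAddGroup X] [MeasurableSpace X] {μ : Measure X}
  {f : X → ℝ}

def WeaklyVanishing (μ : Measure X) (f : X → ℝ) : Prop :=
  ∀ K : Set X, IsCompact K →
    Tendsto (fun a : X => ∫ x in a +ᵥ K, f x ∂μ) (cocompact X) (𝓝 0)

theorem tendsto_measure_inter_vadd_of_mem_nhds {S K₀ K : Set X} (hK₀ : K₀ ∈ 𝓝 0)
    (hK : IsCompact K) (h : Tendsto (fun a => μ (S ∩ (a +ᵥ K₀))) (cocompact X) (𝓝 0)) :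
    Tendsto (fun a => μ (S ∩ (a +ᵥ K))) (cocompact X) (𝓝 0) := by
  obtain ⟨t, -, hcover⟩ := hK.elim_nhds_subcover (fun x => x +ᵥ K₀)
    fun x _ => by simpa using vadd_mem_nhds_vadd x hK₀
  have hle : ∀ a, μ (S ∩ (a +ᵥ K)) ≤ ∑ x ∈ t, μ (S ∩ ((a + x) +ᵥ K₀)) := fun a => by
    refine (measure_mono ?_).trans (measure_biUnion_finset_le t _)
    rintro _ ⟨hyS, z, hzK, rfl⟩
    obtain ⟨x, hxt, w, hwK₀, rfl⟩ := mem_iUnion₂.1 (hcover hzK)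
    exact mem_iUnion₂.2 ⟨x, hxt, hyS, w, hwK₀, by simp [add_assoc]⟩
  have hsum : Tendsto (fun a => ∑ x ∈ t, μ (S ∩ ((a + x) +ᵥ K₀))) (cocompact X) (𝓝 0) := by
    simpa using tendsto_finsetSum t fun x _ =>
      h.comp (Homeomorph.addRight x).map_cocompact.le
  exact tendsto_of_tendsto_of_tendsto_of_le_of_le tendsto_const_nhds hsum (fun _ => zero_le) hle

theorem norm_integral_mul_ofReal_le {𝕜 : Type*} [RCLike 𝕜] (hf : LocallyIntegrable f μ)
    (hf0 : 0 ≤ f) {θ : X → 𝕜} (hθc : HasCompactSupport θ) {C : ℝ} (hC : ∀ x, ‖θ x‖ ≤ C)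
    (a : X) : ‖∫ x, θ (a - x) * (f x : 𝕜) ∂μ‖ ≤ C * ∫ x in a +ᵥ -tsupport θ, f x ∂μ := by
  set S := a +ᵥ -tsupport θ
  have hzero : ∀ x ∉ S, ‖θ (a - x)‖ * f x = 0 := fun x hx => by
    rw [image_eq_zero_of_notMem_tsupport (mt sub_mem_iff_mem_vadd_neg.1 hx), norm_zero, zero_mul]
  calc ‖∫ x, θ (a - x) * (f x : 𝕜) ∂μ‖
      ≤ ∫ x, ‖θ (a - x)‖ * f x ∂μ := by
        refine (norm_integral_le_integral_norm _).trans_eq (integral_congr_ae ?_)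
        exact ae_of_all _ fun x => by simp [abs_of_nonneg (hf0 x)]
    _ = ∫ x in S, ‖θ (a - x)‖ * f x ∂μ :=
        (setIntegral_eq_integral_of_forall_compl_eq_zero hzero).symm
    _ ≤ ∫ x in S, C * f x ∂μ :=
        integral_mono_of_nonneg (ae_of_all _ fun x => mul_nonneg (norm_nonneg _) (hf0 x))
          ((hf.integrableOn_isCompact (hθc.isCompact.neg.vadd a)).const_mul C)
          (ae_of_all _ fun x => mul_le_mul_of_nonneg_right (hC _) (hf0 x))
    _ = C * ∫ x in S, f x ∂μ := integral_const_mul C _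

theorem WeaklyVanishing.tendsto_integral_mul_ofReal {𝕜 : Type*} [RCLike 𝕜]
    (h : WeaklyVanishing μ f) (hf : LocallyIntegrable f μ) (hf0 : 0 ≤ f) {θ : X → 𝕜}
    (hθ : Continuous θ) (hθc : HasCompactSupport θ) :
    Tendsto (fun a => ∫ x, θ (a - x) * (f x : 𝕜) ∂μ) (cocompact X) (𝓝 0) := by
  obtain ⟨C, hC⟩ := hθ.bounded_above_of_compact_support hθc
  refine squeeze_zero_norm (norm_integral_mul_ofReal_le hf hf0 hθc hC) ?_
  simpa using (h _ hθc.isCompact.neg).const_mul C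

variable [BorelSpace X]

theorem continuous_integral_mul_ofReal {𝕜 : Type*} [RCLike 𝕜] (hf : LocallyIntegrable f μ)
    {θ : X → 𝕜} (hθ : Continuous θ) (hθc : HasCompactSupport θ) :
    Continuous fun a => ∫ x, θ (a - x) * (f x : 𝕜) ∂μ := by
  simpa only [integral_mul_ofReal_eq_convolution] using
    hθc.continuous_convolution_right _ hf hθ

theorem setIntegral_vadd_le_integral_mul [T2Space X] (hf : LocallyIntegrable f μ) (hf0 : 0 ≤ f)
    {θ : X → ℝ} (hθ : Continuous θ) (hθc : HasCompactSupport θ) (hθ0 : 0 ≤ θ) {K : Set X}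
    (hK : IsCompact K) (hθK : EqOn θ 1 (-K)) (a : X) :
    ∫ x in a +ᵥ K, f x ∂μ ≤ ∫ x, θ (a - x) * f x ∂μ := by
  have hint : Integrable (fun x => θ (a - x) * f x) μ := by
    simpa [ConvolutionExistsAt, mul_comm] using
      hθc.convolutionExists_right (ContinuousLinearMap.lsmul ℝ ℝ) hf hθ a
  calc ∫ x in a +ᵥ K, f x ∂μ = ∫ x in a +ᵥ K, θ (a - x) * f x ∂μ := by
        refine setIntegral_congr_fun (hK.vadd a).measurableSet fun x hx => ?_
        rw [hθK (sub_mem_iff_mem_vadd_neg.2 (by rwa [neg_neg])), Pi.one_apply, one_mul]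
    _ ≤ ∫ x, θ (a - x) * f x ∂μ :=
        setIntegral_le_integral hint (ae_of_all _ fun x => mul_nonneg (hθ0 _) (hf0 x))

namespace WeaklyVanishing

theorem of_tendsto_integral_mul_ofReal [T2Space X] [LocallyCompactSpace X] {𝕜 : Type*}
    [RCLike 𝕜] (hf : LocallyIntegrable f μ) (hf0 : 0 ≤ f)
    (h : ∀ θ : C(X, 𝕜), HasCompactSupport θ →
      Tendsto (fun a => ∫ x, θ (a - x) * (f x : 𝕜) ∂μ) (cocompact X) (𝓝 0)) :
    WeaklyVanishing μ f := by
  intro K hK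
  obtain ⟨θ, hθK, -, hθc, hθ01⟩ :=
    exists_continuous_one_zero_of_isCompact hK.neg isClosed_empty (disjoint_empty _)
  have hθ𝕜 : Tendsto (fun a => ((∫ x, θ (a - x) * f x ∂μ : ℝ) : 𝕜)) (cocompact X) (𝓝 0) := by
    simpa only [ContinuousMap.comp_apply, ContinuousMap.coe_mk, ← RCLike.ofReal_mul,
      integral_ofReal] using
      h ((ContinuousMap.mk RCLike.ofReal RCLike.continuous_ofReal).comp θ)
        (hθc.comp_left RCLike.ofReal_zero)
  refine squeeze_zero (fun a => integral_nonneg fun x => hf0 x)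
    (setIntegral_vadd_le_integral_mul hf hf0 θ.continuous hθc (fun x => (hθ01 x).1) hK hθK) ?_
  simpa [Function.comp_def] using (RCLike.continuous_re.tendsto 0).comp hθ𝕜

theorem tendsto_measure_lt_inter_vadd [T2Space X] (h : WeaklyVanishing μ f)
    (hf : LocallyIntegrable f μ) (hf0 : 0 ≤ f) {ε : ℝ} (hε : 0 < ε) {K : Set X}
    (hK : IsCompact K) :
    Tendsto (fun a => μ ({x | ε < f x} ∩ (a +ᵥ K))) (cocompact X) (𝓝 0) := by
  have hbound : ∀ a : X, μ ({x | ε < f x} ∩ (a +ᵥ K)) ≤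
      ENNReal.ofReal ((∫ x in a +ᵥ K, f x ∂μ) / ε) := fun a =>
    (measure_mono (inter_subset_inter_left _ fun x (hx : ε < f x) => hx.le)).trans
      (meas_ge_inter_le_ofReal_setIntegral_div (hK.vadd a).measurableSet
        (hf.integrableOn_isCompact (hK.vadd a)) hf0 hε)
  have hlim : Tendsto (fun a => ENNReal.ofReal ((∫ x in a +ᵥ K, f x ∂μ) / ε)) (cocompact X)
      (𝓝 0) := by
    simpa using ENNReal.tendsto_ofReal ((h K hK).div_const ε)
  exact tendsto_of_tendsto_of_tendsto_of_le_of_le tendsto_const_nhds hlim (fun _ => zero_le)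
    hbound

theorem of_tendsto_measure_lt_inter_vadd [T2Space X] [IsFiniteMeasureOnCompacts μ]
    [μ.IsAddLeftInvariant] (hfm : Measurable f) (hf0 : 0 ≤ f) {M : ℝ} (hfM : ∀ x, f x ≤ M)
    (h : ∀ ε > 0, ∀ K : Set X, IsCompact K →
      Tendsto (fun a => μ ({x | ε < f x} ∩ (a +ᵥ K))) (cocompact X) (𝓝 0)) :
    WeaklyVanishing μ f := by
  intro K hK
  refine tendsto_order.2 ⟨fun δ hδ => Eventually.of_forall fun a =>
    hδ.trans_le (integral_nonneg fun x => hf0 x), fun δ hδ => ?_⟩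
  obtain ⟨ε, hε, hεK⟩ := exists_pos_mul_lt (half_pos hδ) (μ.real K)
  have hsmall : Tendsto (fun a => M * μ.real ({x | ε < f x} ∩ (a +ᵥ K))) (cocompact X)
      (𝓝 0) := by
    simpa [measureReal_def] using
      ((ENNReal.tendsto_toReal ENNReal.zero_ne_top).comp (h ε hε K hK)).const_mul M
  filter_upwards [hsmall.eventually_lt_const (half_pos hδ)] with a ha
  calc ∫ x in a +ᵥ K, f x ∂μ
      ≤ M * μ.real ({x | ε < f x} ∩ (a +ᵥ K)) + ε * μ.real (a +ᵥ K) :=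
        setIntegral_le_mul_measureReal_add (hK.vadd a).measurableSet
          (hK.vadd a).measure_lt_top.ne hfm hf0 hfM hε.le
    _ < δ / 2 + δ / 2 := by
        rw [show μ.real (a +ᵥ K) = μ.real K by simp [measureReal_def], mul_comm ε]
        exact add_lt_add ha hεK
    _ = δ := add_halves δ

end WeaklyVanishing

end

theorem stmt11 {X : Type*} [AddCommGroup X] [TopologicalSpace X] [IsTopologicalAddGroup X]
    [LocallyCompactSpace X] [T2Space X]
    [MeasurableSpace X] [BorelSpace X] (μ : Measure X) [μ.IsAddHaarMeasure]
    (φ : X → ℂ) (hmeas : Measurable φ) (hbdd : ∃ M : ℝ, ∀ x, ‖φ x‖ ≤ M) :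
    -- (1) ↔ (2)
    ((∀ K : Set X, IsCompact K →
        Tendsto (fun a : X => ∫ x in a +ᵥ K, ‖φ x‖ ∂μ) (cocompact X) (nhds 0)) ↔
      (∀ θ : C(X, ℂ), HasCompactSupport ⇑θ →
        Continuous (fun a : X => ∫ x, θ (a - x) * (‖φ x‖ : ℂ) ∂μ) ∧
        Tendsto (fun a : X => ∫ x, θ (a - x) * (‖φ x‖ : ℂ) ∂μ) (cocompact X) (nhds 0))) ∧
    -- (1) ↔ (3)
    ((∀ K : Set X, IsCompact K →
        Tendsto (fun a : X => ∫ x in a +ᵥ K, ‖φ x‖ ∂μ) (cocompact X) (nhds 0)) ↔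
      (∀ ε > (0 : ℝ), ∃ K : Set X, K ∈ nhds (0 : X) ∧ IsCompact K ∧
        Tendsto (fun a : X => μ ({x : X | ε < ‖φ x‖} ∩ (a +ᵥ K)))
          (cocompact X) (nhds 0))) := by
  obtain ⟨M, hM⟩ := hbdd
  have hf0 : 0 ≤ fun x => ‖φ x‖ := fun x => norm_nonneg _
  have hf : LocallyIntegrable (fun x => ‖φ x‖) μ :=
    (memLp_top_of_bound hmeas.norm.aestronglyMeasurable M
      (ae_of_all _ fun x => by simpa using hM x)).locallyIntegrable le_top
  change (WeaklyVanishing μ _ ↔ _) ∧ (WeaklyVanishing μ _ ↔ _)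
  refine ⟨⟨fun h θ hθc => ⟨continuous_integral_mul_ofReal hf θ.continuous hθc,
      h.tendsto_integral_mul_ofReal hf hf0 θ.continuous hθc⟩,
    fun h => .of_tendsto_integral_mul_ofReal hf hf0 fun θ hθc => (h θ hθc).2⟩,
    ⟨fun h ε hε => ?_, fun h => ?_⟩⟩
  · obtain ⟨K, hKc, hK⟩ := exists_compact_mem_nhds (0 : X)
    exact ⟨K, hK, hKc, h.tendsto_measure_lt_inter_vadd hf hf0 hε hKc⟩
  · refine .of_tendsto_measure_lt_inter_vadd hmeas.norm hf0 hM fun ε hε K hK => ?_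
    obtain ⟨K₀, hK₀, -, hT⟩ := h ε hε
    exact tendsto_measure_inter_vadd_of_mem_nhds hK₀ hK hT
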